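/- arXiv:1209.1366 — 5 statements merged into one kernel-verified Lean document; each statement's English description precedes it below -/
import Mathlib

section
/- Let G be a connected topological group acting on the n-dimensional torus Tⁿ = (Circle)ⁿ by group automorphisms, via a homomorphism ρ : G → Aut(Tⁿ) such that the map (g, t) ↦ ρ(g)(t) from G × Tⁿ to Tⁿ is continuous. Then the action is trivial: ρ(g) is the identity automorphism for every g ∈ G. -/
/-!
Each `ρ g` is a continuous automorphism, so it is determined by its values on the dense set of
torsion points. A torsion point `x` of order `m` is moved only within the finite set of
`m`-torsion points, and a continuous map from the connected group `G` into a finite set is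
constant; hence `ρ g x = ρ 1 x = x`.
-/

open Real

lemma Circle.dense_setOf_isOfFinOrder : Dense {z : Circle | IsOfFinOrder z} := by
  have hsurj : Function.Surjective fun t : ℝ => Circle.exp (t * (2 * π)) := fun z => by
    obtain ⟨t, rfl⟩ := Circle.exp_surjective z
    exact ⟨t / (2 * π), by dsimp only; rw [div_mul_cancel₀ _ (by positivity)]⟩
  have hrat : DenseRange fun q : ℚ => Circle.exp (q * (2 * π)) :=
    hsurj.denseRange.comp Rat.denseRange_cast (by fun_prop)
  refine hrat.mono ?_
  rintro _ ⟨q, rfl⟩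
  have hden : (q.den : ℝ) * (q * (2 * π)) = q.num * (2 * π) := by
    rw [← mul_assoc]
    congr 1
    exact_mod_cast q.den_mul_eq_num
  refine isOfFinOrder_iff_pow_eq_one.mpr ⟨q.den, q.pos, ?_⟩
  rw [← Circle.exp_natCast_mul, hden, Circle.exp_int_mul_two_pi]

lemma Circle.finite_setOf_pow_eq_one {m : ℕ} (hm : 0 < m) : {z : Circle | z ^ m = 1}.Finite :=
  ((Polynomial.nthRoots m (1 : ℂ)).toFinset.finite_toSet.preimage
    Subtype.val_injective.injOn).subset fun _ hz => Multiset.mem_toFinset.mpr <|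
      (Polynomial.mem_nthRoots hm).mpr <| congrArg Subtype.val hz

section Pi

variable {ι : Type*} [Finite ι] {M : ι → Type*} [∀ i, Monoid (M i)]

lemma Pi.dense_setOf_isOfFinOrder [∀ i, TopologicalSpace (M i)]
    (h : ∀ i, Dense {y : M i | IsOfFinOrder y}) : Dense {x : ∀ i, M i | IsOfFinOrder x} :=
  (dense_pi Set.univ fun i _ => h i).mono fun _ hx =>
    IsOfFinOrder.pi fun i => Set.mem_univ_pi.mp hx i

lemma Pi.finite_setOf_pow_eq_one {m : ℕ} (h : ∀ i, {y : M i | y ^ m = 1}.Finite) :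
    {x : ∀ i, M i | x ^ m = 1}.Finite :=
  (Set.Finite.pi' h).subset fun _ hx i => congrFun hx i

end Pi

namespace PreconnectedSpace

variable {G X Y F : Type*} [TopologicalSpace G] [PreconnectedSpace G] [Monoid X] [Monoid Y]
  [TopologicalSpace Y] [FunLike F X Y] [MonoidHomClass F X Y]

lemma apply_eq_of_isOfFinOrder [T1Space Y] (hfin : ∀ m, 0 < m → {y : Y | y ^ m = 1}.Finite)
    {φ : G → F} (hφ : ∀ x, Continuous fun g => φ g x) {x : X} (hx : IsOfFinOrder x)
    (g g' : G) : φ g x = φ g' x :=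
  isPreconnected_univ.constant_of_mapsTo (hfin _ hx.orderOf_pos).isDiscrete (hφ x).continuousOn
    (fun g _ => show φ g x ^ orderOf x = 1 by rw [← map_pow, pow_orderOf_eq_one, map_one])
    trivial trivial

lemma coe_eq_of_dense_isOfFinOrder [TopologicalSpace X] [T2Space Y]
    (hdense : Dense {x : X | IsOfFinOrder x}) (hfin : ∀ m, 0 < m → {y : Y | y ^ m = 1}.Finite)
    {φ : G → F} (hφ : ∀ x, Continuous fun g => φ g x) (hcont : ∀ g, Continuous (φ g))
    (g g' : G) : ⇑(φ g) = φ g' :=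
  (hcont g).ext_on hdense (hcont g') fun _ hx => apply_eq_of_isOfFinOrder hfin hφ hx g g'

end PreconnectedSpace

theorem connected_group_action_on_torus_by_automorphisms_trivial_general
    {G : Type*} [Group G] [TopologicalSpace G]
    [ConnectedSpace G] (n : ℕ) (ρ : G →* MulAut (Fin n → Circle))
    (hcont : Continuous fun p : G × (Fin n → Circle) => ρ p.1 p.2) :
    ∀ g : G, ρ g = MulEquiv.refl (Fin n → Circle) := by
  intro g
  have hdense : Dense {x : Fin n → Circle | IsOfFinOrder x} :=
    Pi.dense_setOf_isOfFinOrder fun _ => Circle.dense_setOf_isOfFinOrder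
  have hfin (m : ℕ) (hm : 0 < m) : {x : Fin n → Circle | x ^ m = 1}.Finite :=
    Pi.finite_setOf_pow_eq_one fun _ => Circle.finite_setOf_pow_eq_one hm
  have hρ := PreconnectedSpace.coe_eq_of_dense_isOfFinOrder (φ := ρ) hdense hfin
    (fun _ => hcont.comp (continuous_id.prodMk continuous_const))
    (fun _ => hcont.comp (continuous_const.prodMk continuous_id)) g 1
  exact (DFunLike.coe_injective hρ).trans (map_one ρ)

/-- A connected topological group acting continuously on the torus `Tⁿ = (Circle)ⁿ`
by group automorphisms acts trivially. -/
theorem connected_group_action_on_torus_by_automorphisms_trivial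
    {G : Type*} [Group G] [TopologicalSpace G] [IsTopologicalGroup G]
    [ConnectedSpace G] (n : ℕ) (ρ : G →* MulAut (Fin n → Circle))
    (hcont : Continuous fun p : G × (Fin n → Circle) => ρ p.1 p.2) :
    ∀ g : G, ρ g = MulEquiv.refl (Fin n → Circle) :=
  connected_group_action_on_torus_by_automorphisms_trivial_general n ρ hcont
end

section
/- Let n ≥ 1 and let H be a closed subgroup of the torus Tⁿ = (Circle)ⁿ, acting on the unit sphere S^{2n-1} of ℂⁿ by coordinatewise multiplication. If the action of H on S^{2n-1} is free, then either H is a finite cyclic group, or H is topologically isomorphic to the circle group; in the latter case H = {(t^{ε₁}, …, t^{εₙ}) : t ∈ Circle} for some choice of signs εᵢ ∈ {1, −1}. -/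
/-!
Freeness forces every coordinate projection `H → Circle` to be injective: a point of `H` with
`i`-th coordinate `1` fixes the basis vector `eᵢ`. A finite subgroup of `Circle ⊆ ℂˣ` is cyclic.
If `H` is infinite, the image of a projection is an infinite closed subgroup of the circle, hence
the whole circle, so each projection is a continuous bijection from the compact group `H`, i.e. a
topological isomorphism. Composing the `i`-th projection with the inverse of the first one gives a
continuous automorphism of the circle; comparing Fourier coefficients shows it is `t ↦ t ^ k`,
and injectivity forces `k = ±1`.
-/

open Real

namespace AddCircle

variable {T : ℝ}

theorem fourier_apply_add (m : ℤ) (x y : AddCircle T) :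
    fourier m (x + y) = fourier m x * fourier m y := by
  simp only [fourier_apply, smul_add, toCircle_add, Circle.coe_mul]

variable [Fact (0 < T)]

theorem exists_fourierCoeff_ne_zero {f : C(AddCircle T, ℂ)} (hf : f ≠ 0) :
    ∃ m : ℤ, fourierCoeff f m ≠ 0 := by
  by_contra! h
  have hzero : fourierCoeff f = 0 := funext h
  have hsum := hasSum_fourier_series_of_summable (f := f) (hzero ▸ summable_zero)
  simp only [hzero, Pi.zero_apply, zero_smul] at hsum
  exact hf (hsum.unique hasSum_zero)

theorem eq_fourier_of_fourierCoeff_ne_zero {χ : AddCircle T → ℂ}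
    (hχ : ∀ x y, χ (x + y) = χ x * χ y) {m : ℤ} (hm : fourierCoeff χ m ≠ 0) (x : AddCircle T) :
    χ x = fourier m x := by
  have htranslate : (fourier (-m) x * χ x) * fourierCoeff χ m = fourierCoeff χ m := by
    simp only [fourierCoeff, smul_eq_mul, ← MeasureTheory.integral_const_mul]
    -- Haar measure is invariant under `t ↦ x + t`
    conv_rhs => rw [← MeasureTheory.integral_add_left_eq_self _ x]
    simp only [fourier_apply_add, hχ]
    congr 1 with t
    ring
  have hχx : fourier (-m) x * χ x = 1 := mul_eq_right₀ hm |>.mp htranslate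
  calc χ x = fourier m x * (fourier (-m) x * χ x) := by
        rw [← mul_assoc, ← fourier_add, add_neg_cancel, fourier_zero, one_mul]
    _ = fourier m x := by rw [hχx, mul_one]

end AddCircle

namespace Circle

theorem exists_eq_zpow_of_continuous (f : Circle →* Circle) (hf : Continuous f) :
    ∃ k : ℤ, ∀ t, f t = t ^ k := by
  have hT : (0 : ℝ) < 2 * π := two_pi_pos
  have : Fact ((0 : ℝ) < 2 * π) := ⟨hT⟩
  let χ : C(AddCircle (2 * π), ℂ) :=
    ⟨fun x ↦ f (AddCircle.toCircle x), by fun_prop⟩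
  have hχ : χ ≠ 0 := fun h ↦ by simpa [χ] using DFunLike.congr_fun h 0
  obtain ⟨k, hk⟩ := AddCircle.exists_fourierCoeff_ne_zero hχ
  refine ⟨k, fun t ↦ ?_⟩
  obtain ⟨x, rfl⟩ := (AddCircle.homeomorphCircle hT.ne').surjective t
  have := AddCircle.eq_fourier_of_fourierCoeff_ne_zero
    (fun x y ↦ by simp [χ, AddCircle.toCircle_add]) hk x
  rw [AddCircle.homeomorphCircle_apply]
  ext
  simpa [χ, fourier_apply, AddCircle.toCircle_zsmul] using this

theorem eq_one_or_eq_neg_one_of_zpow_injective {k : ℤ}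
    (hk : Function.Injective (· ^ k : Circle → Circle)) : k = 1 ∨ k = -1 := by
  rcases eq_or_ne k 0 with rfl | hk0
  · obtain ⟨m, hm⟩ := exp_eq_one.mp (hk (by simp : exp π ^ (0 : ℤ) = 1 ^ (0 : ℤ)))
    have h1 : (1 : ℝ) = 2 * m := by nlinarith [pi_pos]
    have h2 : (1 : ℤ) = 2 * m := by exact_mod_cast h1
    omega
  · have hroot : exp (2 * π / k) ^ k = 1 ^ k := by
      rw [← exp_zsmul, zsmul_eq_mul, one_zpow, mul_div_cancel₀ _ (by exact_mod_cast hk0),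
        exp_two_pi]
    obtain ⟨m, hm⟩ := exp_eq_one.mp (hk hroot)
    have h1 : (1 : ℝ) = m * k := by
      field_simp at hm
      nlinarith [two_pi_pos]
    exact Int.isUnit_iff.mp (.of_mul_eq_one m (by rw [mul_comm]; exact_mod_cast h1.symm))

theorem finite_or_eq_top_of_isClosed (K : Subgroup Circle) (hK : IsClosed (K : Set Circle)) :
    (K : Set Circle).Finite ∨ K = ⊤ := by
  -- `S = exp⁻¹ K` is a closed subgroup of `ℝ`, hence either dense or cyclic
  let S : AddSubgroup ℝ := K.toAddSubgroup.comap expHom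
  have hS : IsClosed (S : Set ℝ) := hK.preimage exp.continuous
  have hmem_arg (z : Circle) : z ∈ K ↔ Complex.arg z ∈ S := by
    change _ ↔ exp _ ∈ K
    rw [exp_arg]
  rcases S.dense_or_cyclic with hdense | ⟨a, hSa⟩
  · right
    refine K.eq_top_iff'.mpr fun z ↦ (hmem_arg z).mpr ?_
    rw [← SetLike.mem_coe, ← hS.closure_eq, hdense.closure_eq]
    trivial
  · left
    rw [← AddSubgroup.zmultiples_eq_closure] at hSa
    have hfin : IsOfFinOrder (exp a) := by
      obtain ⟨m, hm⟩ : 2 * π ∈ AddSubgroup.zmultiples a := hSa ▸ by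
        change exp _ ∈ K
        rw [exp_two_pi]
        exact K.one_mem
      refine isOfFinOrder_iff_zpow_eq_one.mpr
        ⟨m, ?_, by rw [← exp_zsmul, ← exp_two_pi]; exact congrArg exp hm⟩
      rintro rfl
      simp [two_pi_pos.ne] at hm
    refine (finite_zpowers.mpr hfin).subset fun z hz ↦ ?_
    obtain ⟨k, hk⟩ : Complex.arg z ∈ AddSubgroup.zmultiples a := hSa ▸ (hmem_arg z).mp hz
    exact ⟨k, by rw [← exp_arg z, ← hk]; exact (exp_zsmul a k).symm⟩

theorem monoidHom_surjective_of_injective {G : Type*} [Group G] [TopologicalSpace G]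
    [CompactSpace G] [Infinite G] {φ : G →* Circle} (hφ : Continuous φ)
    (hinj : Function.Injective φ) :
    Function.Surjective φ := by
  have hclosed : IsClosed (φ.range : Set Circle) := by
    rw [MonoidHom.coe_range]
    exact (isCompact_range hφ).isClosed
  refine MonoidHom.range_eq_top.mp <|
    (finite_or_eq_top_of_isClosed φ.range hclosed).resolve_left fun hfin ↦ ?_
  rw [MonoidHom.coe_range] at hfin
  exact Set.infinite_range_of_injective hinj hfin

end Circle

section Torus

variable {ι : Type*} (H : Subgroup (ι → Circle))

noncomputable def torusCoord (i : ι) : H →* Circle :=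
  (Pi.evalMonoidHom (fun _ ↦ Circle) i).comp H.subtype

theorem continuous_torusCoord (i : ι) : Continuous (torusCoord H i) :=
  (continuous_apply i).comp continuous_subtype_val

theorem injective_torusCoord_of_free [Fintype ι] [DecidableEq ι]
    (hfree : ∀ z ∈ H,
      (∃ v : EuclideanSpace ℂ ι, ‖v‖ = 1 ∧ ∀ i, (z i : ℂ) * v i = v i) → z = 1) (i : ι) :
    Function.Injective (torusCoord H i) := by
  refine (injective_iff_map_eq_one _).mpr fun z hz ↦ Subtype.ext <| hfree z z.2
    ⟨EuclideanSpace.single i 1, by simp, fun j ↦ ?_⟩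
  rcases eq_or_ne j i with rfl | hji
  · have hzi : (z : ι → Circle) j = 1 := hz
    simp [hzi]
  · simp [hji]

end Torus

/-- A closed subgroup of the torus `Tⁿ = (Circle)ⁿ` acting freely on the unit sphere
`S^{2n-1} ⊆ ℂⁿ` (by coordinatewise multiplication) is either finite cyclic, or it is
topologically isomorphic to the circle group and equals
`{(t^{ε₁}, …, t^{εₙ}) : t ∈ Circle}` for some signs `εᵢ ∈ {1, -1}`. -/
theorem closed_subgroup_of_torus_acting_freely_on_sphere
    (n : ℕ) (hn : 1 ≤ n) (H : Subgroup (Fin n → Circle))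
    (hclosed : IsClosed (H : Set (Fin n → Circle)))
    (hfree : ∀ z ∈ H,
      (∃ v : EuclideanSpace ℂ (Fin n), ‖v‖ = 1 ∧ ∀ i, (z i : ℂ) * v i = v i) → z = 1) :
    (Finite H ∧ IsCyclic H) ∨
      ((∃ e : H ≃* Circle, Continuous e ∧ Continuous e.symm) ∧
        ∃ ε : Fin n → ℤ, (∀ i, ε i = 1 ∨ ε i = -1) ∧
          ∀ z : Fin n → Circle, z ∈ H ↔ ∃ t : Circle, ∀ i, z i = t ^ ε i) := by
  have hinj := injective_torusCoord_of_free H hfree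
  let i₀ : Fin n := ⟨0, hn⟩
  by_cases hfin : Finite H
  · exact .inl ⟨hfin, isCyclic_of_injective_ringHom (Circle.coeHom.comp (torusCoord H i₀))
      (Subtype.coe_injective.comp (hinj i₀))⟩
  have : Infinite H := not_finite_iff_infinite.mp hfin
  have : CompactSpace H := isCompact_iff_compactSpace.mp hclosed.isCompact
  let e : H ≃* Circle := .ofBijective (torusCoord H i₀)
    ⟨hinj i₀, Circle.monoidHom_surjective_of_injective (continuous_torusCoord H i₀) (hinj i₀)⟩
  have he : Continuous e := continuous_torusCoord H i₀
  have he_symm : Continuous e.symm := he.continuous_symm_of_equiv_compact_to_t2 (f := e.toEquiv)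
  choose ε hε using fun i ↦ Circle.exists_eq_zpow_of_continuous
    ((torusCoord H i).comp e.symm.toMonoidHom) ((continuous_torusCoord H i).comp he_symm)
  have hε_sign (i : Fin n) : ε i = 1 ∨ ε i = -1 :=
    Circle.eq_one_or_eq_neg_one_of_zpow_injective <| by
      convert (hinj i).comp e.symm.injective using 1
      exact funext fun t ↦ (hε i t).symm
  have hsymm (t : Circle) : (e.symm t : Fin n → Circle) = fun i ↦ t ^ ε i := funext (hε · t)
  refine .inr ⟨⟨e, he, he_symm⟩, ε, hε_sign, fun z ↦ ⟨fun hz ↦ ⟨e ⟨z, hz⟩, ?_⟩, ?_⟩⟩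
  · rw [← funext_iff, ← hsymm, e.symm_apply_apply]
  · rintro ⟨t, ht⟩
    rw [funext ht, ← hsymm]
    exact (e.symm t).2
end

section
/- Let p be a prime and let H be a subgroup of the torus Tⁿ = (Circle)ⁿ which is isomorphic as a group to (ℤ/pℤ) × (ℤ/pℤ). Then the coordinatewise action of H on the unit sphere S^{2n-1} of ℂⁿ is not free: some nontrivial element of H fixes a point of S^{2n-1}. -/
/-- `Multiplicative (ZMod p) × Multiplicative (ZMod p)` is not cyclic for `p` prime. -/
lemma zp_zp_not_cyclic (p : ℕ) (hp : p.Prime) :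
    ¬ IsCyclic (Multiplicative (ZMod p) × Multiplicative (ZMod p)) := by
  haveI := Fact.mk hp
  intro hc
  have hcard : Nat.card (Multiplicative (ZMod p) × Multiplicative (ZMod p)) = p * p := by
    simp [Nat.card_prod, Nat.card_eq_fintype_card, ZMod.card]
  have hexp := IsCyclic.exponent_eq_card
    (α := Multiplicative (ZMod p) × Multiplicative (ZMod p))
  have hdvd : Monoid.exponent (Multiplicative (ZMod p) × Multiplicative (ZMod p)) ∣ p := by
    apply Monoid.exponent_dvd_of_forall_pow_eq_one
    intro g
    have h1 : g.1 ^ p = 1 := by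
      apply Multiplicative.toAdd.injective
      simp [toAdd_pow, nsmul_eq_mul, ZMod.natCast_self]
    have h2 : g.2 ^ p = 1 := by
      apply Multiplicative.toAdd.injective
      simp [toAdd_pow, nsmul_eq_mul, ZMod.natCast_self]
    exact Prod.ext (by simpa using h1) (by simpa using h2)
  rw [hexp, hcard] at hdvd
  have hple : p * p ≤ p := Nat.le_of_dvd hp.pos hdvd
  nlinarith [hp.two_le]

/-- If `p` is prime and `H` is a subgroup of the torus `Tⁿ = (Circle)ⁿ` isomorphic to
`(ℤ/pℤ) × (ℤ/pℤ)`, then the coordinatewise action of `H` on the unit sphere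
`S^{2n-1} ⊆ ℂⁿ` is not free: some nontrivial element of `H` fixes a point of the sphere. -/
theorem subgroup_isomorphic_to_Zp_times_Zp_not_free_on_sphere
    (n : ℕ) (p : ℕ) (hp : p.Prime) (H : Subgroup (Fin n → Circle))
    (e : H ≃* Multiplicative (ZMod p) × Multiplicative (ZMod p)) :
    ∃ z ∈ H, z ≠ 1 ∧ ∃ v : EuclideanSpace ℂ (Fin n), ‖v‖ = 1 ∧
      ∀ i, (z i : ℂ) * v i = v i := by
  haveI := Fact.mk hp
  haveI : Nontrivial (Multiplicative (ZMod p) × Multiplicative (ZMod p)) := by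
    infer_instance
  haveI hHnt : Nontrivial H := e.toEquiv.nontrivial
  haveI hHfin : Finite H := Finite.of_equiv _ e.toEquiv.symm
  have hnotcyc : ¬ IsCyclic H := fun hc =>
    zp_zp_not_cyclic p hp (isCyclic_of_surjective e e.surjective)
  -- n must be positive
  rcases Nat.eq_zero_or_pos n with hn | hn
  · exfalso
    subst hn
    haveI : Subsingleton (Fin 0 → Circle) := by
      constructor; intro a b; funext i; exact absurd i.2 (by omega)
    haveI : Subsingleton H := ⟨fun a b => Subtype.ext (Subsingleton.elim _ _)⟩
    exact not_subsingleton_iff_nontrivial.mpr hHnt ‹Subsingleton H›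
  · set i : Fin n := ⟨0, hn⟩
    let φ : H →* ℂ :=
      { toFun := fun z => ((z : Fin n → Circle) i : ℂ)
        map_one' := by simp
        map_mul' := by intro a b; simp }
    have hninj : ¬ Function.Injective φ := fun hinj =>
      hnotcyc (isCyclic_of_subgroup_isDomain φ hinj)
    rw [Function.not_injective_iff] at hninj
    obtain ⟨a, b, hab, hne⟩ := hninj
    refine ⟨(a * b⁻¹ : H), (a * b⁻¹ : H).2, ?_, ?_⟩
    · intro h
      apply hne
      have : (a * b⁻¹ : H) = 1 := Subtype.ext h
      exact mul_inv_eq_one.mp this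
    · have hcoord : ((a * b⁻¹ : H) : Fin n → Circle) i = 1 := by
        have : ((a : Fin n → Circle) i : ℂ) = ((b : Fin n → Circle) i : ℂ) := hab
        have hci : (a : Fin n → Circle) i = (b : Fin n → Circle) i :=
          Subtype.ext this
        push_cast [Subgroup.coe_mul, Subgroup.coe_inv]
        simp [Pi.mul_apply, Pi.inv_apply, hci]
      refine ⟨EuclideanSpace.single i 1, by simp, ?_⟩
      intro j
      rcases eq_or_ne j i with rfl | hji
      · simp [hcoord]
      · simp [EuclideanSpace.single_apply, hji]
end

section
/- Let n ≥ 1 and regard ℂⁿ as a real inner product space, so that its group of ℝ-linear isometric automorphisms is the orthogonal group O(2n). Let T be the subgroup of this group consisting of the maps v ↦ z·v for z ∈ (Circle)ⁿ acting by coordinatewise multiplication (the maximal torus). Then the centralizer of T in the group of ℝ-linear isometric automorphisms of ℂⁿ is exactly T itself. -/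
/-!
A linear isometry `f` commuting with the torus is diagonal: commuting with the reflection
`-1` in the `j`-th coordinate forces the `j`-th coordinate of `f v` to depend on `v j` alone,
and commuting with the scalar `I` makes `f` complex linear, so `(f v) j = v j * c j`.
Since `f` is an isometry, each `c j` has modulus one.
-/

/-- The map `v ↦ (zᵢ·vᵢ)ᵢ` on `ℂⁿ` given by coordinatewise multiplication by an element
`z` of the torus `(Circle)ⁿ`. -/
noncomputable def torusElementAction (n : ℕ) (z : Fin n → Circle)
    (v : EuclideanSpace ℂ (Fin n)) : EuclideanSpace ℂ (Fin n) :=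
  WithLp.toLp 2 (fun i => (z i : ℂ) * v i)

theorem Circle.exists_coe_eq {u : ℂ} (hu : ‖u‖ = 1) : ∃ z : Circle, (z : ℂ) = u :=
  ⟨⟨u, mem_sphere_zero_iff_norm.2 hu⟩, rfl⟩

theorem Complex.smul_eq_re_smul_add_im_smul {E : Type*} [AddCommGroup E] [Module ℂ E]
    [Module ℝ E] [IsScalarTower ℝ ℂ E] (a : ℂ) (v : E) :
    a • v = a.re • v + a.im • (Complex.I • v) := by
  conv_lhs => rw [← Complex.re_add_im a]
  rw [add_smul, mul_smul, ← Complex.coe_algebraMap, algebraMap_smul, algebraMap_smul]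

theorem LinearMap.map_smul_of_map_I_smul {E F : Type*} [AddCommGroup E] [Module ℂ E]
    [Module ℝ E] [IsScalarTower ℝ ℂ E] [AddCommGroup F] [Module ℂ F] [Module ℝ F]
    [IsScalarTower ℝ ℂ F] (f : E →ₗ[ℝ] F) (hf : ∀ v, f (Complex.I • v) = Complex.I • f v)
    (a : ℂ) (v : E) : f (a • v) = a • f v := by
  rw [Complex.smul_eq_re_smul_add_im_smul a v, Complex.smul_eq_re_smul_add_im_smul a (f v),
    map_add, map_smul, map_smul, hf]

section TorusElementAction

variable {n : ℕ}

@[simp]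
theorem torusElementAction_apply (z : Fin n → Circle) (v : EuclideanSpace ℂ (Fin n))
    (i : Fin n) : torusElementAction n z v i = z i * v i :=
  rfl

theorem torusElementAction_comm (z w : Fin n → Circle) (v : EuclideanSpace ℂ (Fin n)) :
    torusElementAction n z (torusElementAction n w v) =
      torusElementAction n w (torusElementAction n z v) := by
  ext i
  simp only [torusElementAction_apply]
  ring

theorem torusElementAction_const (w : Circle) (v : EuclideanSpace ℂ (Fin n)) :
    torusElementAction n (fun _ => w) v = (w : ℂ) • v :=
  rfl

end TorusElementAction

section CommuteWithTorus

variable {n : ℕ} (f : EuclideanSpace ℂ (Fin n) →ₗ[ℝ] EuclideanSpace ℂ (Fin n))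
  (hf : ∀ z v, f (torusElementAction n z v) = torusElementAction n z (f v))
include hf

theorem apply_eq_apply_single_of_commute_torus (v : EuclideanSpace ℂ (Fin n)) (j : Fin n) :
    f v j = f (EuclideanSpace.single j (v j)) j := by
  set w := v - EuclideanSpace.single j (v j)
  have hw : torusElementAction n (Function.update 1 j (-1)) w = w := by
    ext k
    by_cases hk : k = j
    · subst hk
      simp [w]
    · simp [hk]
  have hwj : f w j = -f w j := by
    conv_lhs => rw [← hw, hf]
    simp
  calc f v j = f (EuclideanSpace.single j (v j) + w) j := by rw [add_sub_cancel]
    _ = f (EuclideanSpace.single j (v j)) j := by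
      rw [map_add, PiLp.add_apply, self_eq_neg.1 hwj, add_zero]

theorem apply_eq_mul_of_commute_torus (v : EuclideanSpace ℂ (Fin n)) (j : Fin n) :
    f v j = v j * f (EuclideanSpace.single j 1) j := by
  obtain ⟨i, hi⟩ := Circle.exists_coe_eq Complex.norm_I
  have hI : ∀ v, f (Complex.I • v) = Complex.I • f v := fun v => by
    simpa [torusElementAction_const, hi] using hf (fun _ => i) v
  have hsingle : EuclideanSpace.single j (v j) = v j • EuclideanSpace.single j 1 := by
    ext k
    by_cases hk : k = j <;> simp [hk]
  rw [apply_eq_apply_single_of_commute_torus f hf, hsingle, f.map_smul_of_map_I_smul hI,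
    PiLp.smul_apply, smul_eq_mul]

end CommuteWithTorus

theorem LinearIsometry.norm_eq_one_of_apply_eq_mul {n : ℕ}
    (f : EuclideanSpace ℂ (Fin n) →ₗᵢ[ℝ] EuclideanSpace ℂ (Fin n)) {c : Fin n → ℂ}
    (hc : ∀ v j, f v j = v j * c j) (j : Fin n) : ‖c j‖ = 1 := by
  have hsingle : f (EuclideanSpace.single j 1) = EuclideanSpace.single j (c j) := by
    ext k
    by_cases hk : k = j
    · subst hk
      simp [hc]
    · simp [hc, hk]
  simpa [hsingle, PiLp.norm_single] using f.norm_map (EuclideanSpace.single j 1)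

theorem centralizer_of_maximal_torus_in_orthogonal_group_even_general
    (n : ℕ)
    (f : EuclideanSpace ℂ (Fin n) ≃ₗᵢ[ℝ] EuclideanSpace ℂ (Fin n)) :
    (∀ z : Fin n → Circle, ∀ v : EuclideanSpace ℂ (Fin n),
        f (torusElementAction n z v) = torusElementAction n z (f v)) ↔
    (∃ z : Fin n → Circle, ∀ v : EuclideanSpace ℂ (Fin n),
        f v = torusElementAction n z v) := by
  constructor
  · intro hf
    have hc := apply_eq_mul_of_commute_torus f.toLinearMap hf
    choose z hz using fun j =>
      Circle.exists_coe_eq (f.toLinearIsometry.norm_eq_one_of_apply_eq_mul hc j)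
    refine ⟨z, fun v => ?_⟩
    ext j
    rw [torusElementAction_apply, hz, mul_comm]
    exact hc v j
  · rintro ⟨z, hz⟩ w v
    rw [hz, hz, torusElementAction_comm]

/-- An ℝ-linear isometric automorphism of `ℂⁿ` (an element of `O(2n)`) commutes with every
element of the maximal torus `Tⁿ = (Circle)ⁿ` (acting by coordinatewise multiplication) if
and only if it is itself given by an element of the torus: the centralizer of the maximal
torus in `O(2n)` is the torus itself. -/
theorem centralizer_of_maximal_torus_in_orthogonal_group_even
    (n : ℕ) (hn : 1 ≤ n)
    (f : EuclideanSpace ℂ (Fin n) ≃ₗᵢ[ℝ] EuclideanSpace ℂ (Fin n)) :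
    (∀ z : Fin n → Circle, ∀ v : EuclideanSpace ℂ (Fin n),
        f (torusElementAction n z v) = torusElementAction n z (f v)) ↔
    (∃ z : Fin n → Circle, ∀ v : EuclideanSpace ℂ (Fin n),
        f v = torusElementAction n z v) :=
  centralizer_of_maximal_torus_in_orthogonal_group_even_general n f
end

section
/- Let n ≥ 0 and let the group (Circle)ⁿ × {1, −1} act on the unit sphere S^{2n} of ℂⁿ × ℝ by (z, ε)·(v, x) = (z·v, εx), where z ∈ (Circle)ⁿ acts on ℂⁿ by coordinatewise multiplication. Then a nontrivial subgroup H of (Circle)ⁿ × {1, −1} acts freely on S^{2n} if and only if H is the two-element subgroup generated by the antipodal element ((−1, …, −1), −1), whose action on S^{2n} is the antipodal map (v, x) ↦ (−v, −x). -/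
/-- The element `-1` of the circle group. -/
noncomputable def circleNegOne : Circle := ⟨-1, by simp [Submonoid.unitSphere]⟩

/-!
An element `(z, ε)` fixes a point of `S^{2n}` as soon as `ε = 1` (it fixes the pole `(0, 1)`) or
some `zᵢ = 1` (it fixes the basis vector `eᵢ`); the antipodal element fixes nothing. So in a
freely acting `H` every element `g ≠ 1` has `ε = -1`, hence `g²` fixes the pole, so `g² = 1`,
forcing `zᵢ = ±1` and then `zᵢ = -1`: the only nontrivial element of `H` is the antipodal one.
-/

lemma eq_one_or_eq_of_mem_zpowers {G : Type*} [Group G] {a g : G} (ha : a * a = 1)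
    (hg : g ∈ Subgroup.zpowers a) : g = 1 ∨ g = a := by
  obtain ⟨k, rfl⟩ := Subgroup.mem_zpowers_iff.1 hg
  have ha2 : a ^ (2 : ℤ) = 1 := by rwa [zpow_two]
  rcases Int.even_or_odd' k with ⟨m, rfl | rfl⟩
  · left; rw [zpow_mul, ha2, one_zpow]
  · right; rw [zpow_add, zpow_mul, ha2, one_zpow, one_mul, zpow_one]

lemma coe_circleNegOne : (circleNegOne : ℂ) = -1 := rfl

namespace EvenSphere

variable {n : ℕ}

def FixesPoint (g : (Fin n → Circle) × ℤˣ) : Prop :=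
  ∃ (v : EuclideanSpace ℂ (Fin n)) (x : ℝ), ‖v‖ ^ 2 + x ^ 2 = 1 ∧
    (∀ i, (g.1 i : ℂ) * v i = v i) ∧ ((g.2 : ℤ) : ℝ) * x = x

variable (n) in
noncomputable def antipodal : (Fin n → Circle) × ℤˣ := (fun _ => circleNegOne, -1)

variable (n) in
lemma antipodal_mul_self : antipodal n * antipodal n = 1 :=
  Prod.ext (funext fun _ => Circle.ext (by simp [antipodal, coe_circleNegOne])) (by simp [antipodal])

lemma fixesPoint_of_snd_eq_one {g : (Fin n → Circle) × ℤˣ} (h : g.2 = 1) : FixesPoint g :=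
  ⟨0, 1, by simp, fun _ => by simp, by simp [h]⟩

lemma fixesPoint_of_apply_eq_one {g : (Fin n → Circle) × ℤˣ} (i : Fin n) (h : g.1 i = 1) :
    FixesPoint g := by
  refine ⟨EuclideanSpace.single i 1, 0, by simp [PiLp.norm_single], fun j => ?_, by simp⟩
  by_cases hij : j = i
  · subst hij; simp [h]
  · simp [hij]

variable (n) in
lemma not_fixesPoint_antipodal : ¬FixesPoint (antipodal n) := by
  rintro ⟨v, x, hvx, hv, hx⟩
  have hx0 : x = 0 := by
    have : -x = x := by simpa [antipodal] using hx
    linarith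
  have hv0 : v = 0 := by
    ext i
    have : -v i = v i := by simpa [antipodal, coe_circleNegOne] using hv i
    simp only [PiLp.zero_apply]
    linear_combination (-1 / 2 : ℂ) * this
  simp [hv0, hx0] at hvx

lemma eq_antipodal_of_mul_self_eq_one {g : (Fin n → Circle) × ℤˣ} (hsq : g * g = 1)
    (hg : ¬FixesPoint g) : g = antipodal n := by
  refine Prod.ext (funext fun i => ?_) ?_
  · have hi : (g.1 i : ℂ) * g.1 i = 1 := by
      simpa using congr_arg (fun g : (Fin n → Circle) × ℤˣ => (g.1 i : ℂ)) hsq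
    rcases mul_self_eq_one_iff.1 hi with h | h
    · exact absurd (fixesPoint_of_apply_eq_one i (Circle.ext h)) hg
    · exact Circle.ext h
  · exact (Int.units_eq_one_or g.2).resolve_left fun h => hg (fixesPoint_of_snd_eq_one h)

lemma eq_antipodal_of_mem_of_ne_one {H : Subgroup ((Fin n → Circle) × ℤˣ)}
    (hfree : ∀ g ∈ H, FixesPoint g → g = 1) {g : (Fin n → Circle) × ℤˣ} (hg : g ∈ H)
    (hg1 : g ≠ 1) : g = antipodal n :=
  eq_antipodal_of_mul_self_eq_one
    (hfree _ (H.mul_mem hg hg) (fixesPoint_of_snd_eq_one (Int.units_mul_self g.2)))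
    fun h => hg1 (hfree g hg h)

end EvenSphere

open EvenSphere

/-- Let the group `(Circle)ⁿ × {1, -1}` (the centralizer of the maximal torus of `O(2n+1)`,
with `{1, -1}` realized as `ℤˣ`) act on the unit sphere `S^{2n} ⊆ ℂⁿ × ℝ` by
`(z, ε)·(v, x) = (z·v, εx)`.  A nontrivial subgroup `H` acts freely on `S^{2n}` if and
only if `H` is the two-element subgroup generated by the antipodal element
`((-1, …, -1), -1)`, whose action is the antipodal map `(v, x) ↦ (-v, -x)`. -/
theorem nontrivial_subgroup_free_on_even_sphere_iff_antipodal
    (n : ℕ) (H : Subgroup ((Fin n → Circle) × ℤˣ)) (hH : H ≠ ⊥) :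
    (∀ g ∈ H,
      (∃ (v : EuclideanSpace ℂ (Fin n)) (x : ℝ), ‖v‖ ^ 2 + x ^ 2 = 1 ∧
        (∀ i, (g.1 i : ℂ) * v i = v i) ∧ ((g.2 : ℤ) : ℝ) * x = x) → g = 1) ↔
    H = Subgroup.zpowers ((fun _ => circleNegOne : Fin n → Circle), (-1 : ℤˣ)) := by
  change (∀ g ∈ H, FixesPoint g → g = 1) ↔ H = Subgroup.zpowers (antipodal n)
  constructor
  · intro hfree
    have hmem : ∀ g ∈ H, g = 1 ∨ g = antipodal n := fun g hg =>
      or_iff_not_imp_left.2 (eq_antipodal_of_mem_of_ne_one hfree hg)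
    obtain ⟨⟨g, hg⟩, hg1⟩ := Subgroup.ne_bot_iff_exists_ne_one.1 hH
    have hanti : antipodal n ∈ H :=
      eq_antipodal_of_mem_of_ne_one hfree hg (by simpa using hg1) ▸ hg
    refine le_antisymm (fun g hg => ?_) (Subgroup.zpowers_le.2 hanti)
    rcases hmem g hg with rfl | rfl
    exacts [one_mem _, Subgroup.mem_zpowers _]
  · rintro rfl g hg hfix
    rcases eq_one_or_eq_of_mem_zpowers (antipodal_mul_self n) hg with rfl | rfl
    · rfl
    · exact absurd hfix (not_fixesPoint_antipodal n)
end
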